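/- The operator M_Q(A) = (1/3)A + Q·A − A:M_Q^{(4)} on 3×3 matrices is self-adjoint with respect to the Frobenius inner product (M_Q(A):B = M_Q(B):A) and positive semidefinite (M_Q(A):A ≥ 0) for any Q ∈ Q_phy. -/

import Mathlib

open MeasureTheory

noncomputable def sphereMeasure :
    Measure (Metric.sphere (0 : EuclideanSpace ℝ (Fin 3)) 1) :=
  (volume : Measure (EuclideanSpace ℝ (Fin 3))).toSphere

noncomputable def quadForm (B : Matrix (Fin 3) (Fin 3) ℝ)
    (m : EuclideanSpace ℝ (Fin 3)) : ℝ :=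
  ∑ i, ∑ j, B i j * m i * m j

/-- The Bingham probability density on the sphere associated with `B`. -/
noncomputable def binghamDensity (B : Matrix (Fin 3) (Fin 3) ℝ)
    (m : EuclideanSpace ℝ (Fin 3)) : ℝ :=
  Real.exp (quadForm B m) /
    ∫ m' : Metric.sphere (0 : EuclideanSpace ℝ (Fin 3)) 1,
      Real.exp (quadForm B m') ∂sphereMeasure

/-- Fourth moment `M^{(4)}_{ijkl} = ∫ m_i m_j m_k m_l f_B dm` of the Bingham
distribution with field `B`. -/
noncomputable def M4 (B : Matrix (Fin 3) (Fin 3) ℝ) (i j k l : Fin 3) : ℝ :=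
  ∫ m : Metric.sphere (0 : EuclideanSpace ℝ (Fin 3)) 1,
    (m : EuclideanSpace ℝ (Fin 3)) i * (m : EuclideanSpace ℝ (Fin 3)) j *
    (m : EuclideanSpace ℝ (Fin 3)) k * (m : EuclideanSpace ℝ (Fin 3)) l *
    binghamDensity B m ∂sphereMeasure

/-- Frobenius inner product of 3×3 matrices. -/
def frob (A B : Matrix (Fin 3) (Fin 3) ℝ) : ℝ := ∑ i, ∑ j, A i j * B i j

/-- The operator `M_Q(A) = (1/3)A + Q·A − A:M_Q^{(4)}` on 3×3 matrices. -/
noncomputable def MQop (Q Bbar A : Matrix (Fin 3) (Fin 3) ℝ) :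
    Matrix (Fin 3) (Fin 3) ℝ :=
  (1 / 3 : ℝ) • A + Q * A - Matrix.of fun i j => ∑ k, ∑ l, M4 Bbar i j k l * A k l

/-!
Substituting `Q = ∫ m mᵀ f dm - (∫ f dm) I / 3` and `A : M⁽⁴⁾ = ∫ m mᵀ (m·Am) f dm` gives
`M_Q(A) : B = (1 - ∫ f dm) / 3 · A : B + ∫ ((Aᵀm)·(Bᵀm) - (m·Am)(m·Bm)) f dm`,
which is symmetric in `A` and `B`. For `B = A` the integrand is nonnegative by Cauchy–Schwarz,
since `|m| = 1` on the sphere, and `∫ f dm ≤ 1`: it is `Z / Z` for the normalising constant `Z`.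
-/

open Matrix

local notation "ℝ³" => EuclideanSpace ℝ (Fin 3)

local notation "𝕊²" => Metric.sphere (0 : EuclideanSpace ℝ (Fin 3)) 1

section Frobenius

variable (A B C : Matrix (Fin 3) (Fin 3) ℝ)

lemma frob_comm : frob A B = frob B A := by
  simp only [frob, mul_comm]

lemma frob_add_left : frob (A + B) C = frob A C + frob B C := by
  simp only [frob, Matrix.add_apply, add_mul, Finset.sum_add_distrib]

lemma frob_sub_left : frob (A - B) C = frob A C - frob B C := by
  simp only [frob, Matrix.sub_apply, sub_mul, Finset.sum_sub_distrib]

lemma frob_smul_left (a : ℝ) : frob (a • A) B = a * frob A B := by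
  simp only [frob, Matrix.smul_apply, smul_eq_mul, mul_assoc, Finset.mul_sum]

lemma frob_mul_left : frob (A * B) C = frob A (C * Bᵀ) := by
  simp only [frob, mul_apply, transpose_apply, Fin.sum_univ_three]
  ring

lemma frob_self_nonneg : 0 ≤ frob A A :=
  Finset.sum_nonneg fun _ _ => Finset.sum_nonneg fun _ _ => mul_self_nonneg _

end Frobenius

section QuadForm

variable (A B : Matrix (Fin 3) (Fin 3) ℝ) (m : ℝ³)

@[fun_prop]
lemma continuous_quadForm : Continuous (quadForm A) := by
  unfold quadForm
  fun_prop

lemma quadForm_transpose : quadForm Aᵀ m = quadForm A m := by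
  simp only [quadForm, transpose_apply, Fin.sum_univ_three]
  ring

lemma quadForm_mul_transpose_comm : quadForm (A * Bᵀ) m = quadForm (B * Aᵀ) m := by
  rw [← quadForm_transpose, transpose_mul, transpose_transpose]

lemma sq_quadForm_le : quadForm A m ^ 2 ≤ quadForm (A * Aᵀ) m * ‖m‖ ^ 2 := by
  have hA : quadForm A m = ∑ j, (∑ i, A i j * m i) * m j := by
    simp only [quadForm, Fin.sum_univ_three]
    ring
  have hAAt : quadForm (A * Aᵀ) m = ∑ j, (∑ i, A i j * m i) ^ 2 := by
    simp only [quadForm, mul_apply, transpose_apply, Fin.sum_univ_three]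
    ring
  rw [hA, hAAt, EuclideanSpace.real_norm_sq_eq]
  exact Finset.sum_mul_sq_le_sq_mul_sq _ _ _

end QuadForm

section SecondMoment

variable {X : Type*} [MeasurableSpace X] (μ : Measure X) (u : X → ℝ³) (w : X → ℝ)

noncomputable def secondMoment : Matrix (Fin 3) (Fin 3) ℝ :=
  Matrix.of fun i j => ∫ x, u x i * u x j * w x ∂μ

lemma frob_secondMoment (C : Matrix (Fin 3) (Fin 3) ℝ)
    (h : ∀ i j, Integrable (fun x => u x i * u x j * w x) μ) :
    frob (secondMoment μ u w) C = ∫ x, quadForm C (u x) * w x ∂μ := by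
  have hterm : ∀ i j, Integrable (fun x => C i j * u x i * u x j * w x) μ := fun i j => by
    simpa only [mul_assoc] using (h i j).const_mul (C i j)
  simp only [frob, secondMoment, quadForm, of_apply, Finset.sum_mul]
  rw [integral_finsetSum _ fun i _ => integrable_finsetSum _ fun j _ => hterm i j]
  refine Finset.sum_congr rfl fun i _ => ?_
  rw [integral_finsetSum _ fun j _ => hterm i j]
  refine Finset.sum_congr rfl fun j _ => ?_
  rw [← integral_mul_const]
  exact integral_congr_ae (ae_of_all _ fun x => by ring)

end SecondMoment

instance : IsFiniteMeasure sphereMeasure := by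
  unfold sphereMeasure
  infer_instance

lemma Continuous.integrable_sphereMeasure {φ : 𝕊² → ℝ} (hφ : Continuous φ) :
    Integrable φ sphereMeasure :=
  hφ.integrable_of_hasCompactSupport (HasCompactSupport.of_compactSpace φ)

def IsBinghamQTensor (Q Bbar : Matrix (Fin 3) (Fin 3) ℝ) : Prop :=
  ∀ i j, ∫ x : 𝕊², ((x : ℝ³) i * (x : ℝ³) j - if i = j then (1 : ℝ) / 3 else 0) *
    binghamDensity Bbar x ∂sphereMeasure = Q i j

section Bingham

variable (Bbar : Matrix (Fin 3) (Fin 3) ℝ)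

@[fun_prop]
lemma continuous_binghamDensity : Continuous (binghamDensity Bbar) := by
  unfold binghamDensity
  fun_prop

lemma binghamDensity_nonneg (m : ℝ³) : 0 ≤ binghamDensity Bbar m :=
  div_nonneg (Real.exp_nonneg _) (integral_nonneg fun _ => Real.exp_nonneg _)

lemma integral_binghamDensity_le_one :
    ∫ x : 𝕊², binghamDensity Bbar x ∂sphereMeasure ≤ 1 := by
  simp only [binghamDensity, integral_div]
  exact div_self_le_one _

lemma IsBinghamQTensor.eq_secondMoment_sub {Q : Matrix (Fin 3) (Fin 3) ℝ}
    (hQ : IsBinghamQTensor Q Bbar) :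
    Q = secondMoment sphereMeasure (↑) (fun x : 𝕊² => binghamDensity Bbar x) -
      ((∫ x : 𝕊², binghamDensity Bbar x ∂sphereMeasure) / 3) • 1 := by
  ext i j
  rw [← hQ i j]
  simp only [sub_mul]
  rw [integral_sub, integral_const_mul]
  · by_cases hij : i = j <;> simp [secondMoment, hij, div_eq_inv_mul]
  · exact Continuous.integrable_sphereMeasure (by fun_prop)
  · exact Continuous.integrable_sphereMeasure (by fun_prop)

lemma M4_contraction_eq_secondMoment (A : Matrix (Fin 3) (Fin 3) ℝ) :
    (Matrix.of fun i j => ∑ k, ∑ l, M4 Bbar i j k l * A k l) =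
      secondMoment sphereMeasure (↑) (fun x : 𝕊² => quadForm A x * binghamDensity Bbar x) := by
  ext i j
  calc ∑ k, ∑ l, M4 Bbar i j k l * A k l
      = frob (secondMoment sphereMeasure (↑)
          fun x : 𝕊² => (x : ℝ³) i * (x : ℝ³) j * binghamDensity Bbar x) A := by
        refine Finset.sum_congr rfl fun k _ => Finset.sum_congr rfl fun l _ => ?_
        exact congrArg (· * A k l) (integral_congr_ae (ae_of_all _ fun x => by ring))
    _ = ∫ x : 𝕊², quadForm A x * ((x : ℝ³) i * (x : ℝ³) j * binghamDensity Bbar x)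
          ∂sphereMeasure :=
        frob_secondMoment _ _ _ A fun k l => Continuous.integrable_sphereMeasure (by fun_prop)
    _ = _ := integral_congr_ae (ae_of_all _ fun x => by ring)

end Bingham

lemma IsBinghamQTensor.frob_MQop {Q Bbar : Matrix (Fin 3) (Fin 3) ℝ}
    (hQ : IsBinghamQTensor Q Bbar) (A B : Matrix (Fin 3) (Fin 3) ℝ) :
    frob (MQop Q Bbar A) B =
      (1 - ∫ x : 𝕊², binghamDensity Bbar x ∂sphereMeasure) / 3 * frob A B +
        ∫ x : 𝕊², (quadForm (B * Aᵀ) x - quadForm A x * quadForm B x) *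
          binghamDensity Bbar x ∂sphereMeasure := by
  have hM2 : frob (secondMoment sphereMeasure (↑) (fun x : 𝕊² => binghamDensity Bbar x) * A) B =
      ∫ x : 𝕊², quadForm (B * Aᵀ) x * binghamDensity Bbar x ∂sphereMeasure := by
    rw [frob_mul_left, frob_secondMoment]
    exact fun i j => Continuous.integrable_sphereMeasure (by fun_prop)
  have hM4 : frob (Matrix.of fun i j => ∑ k, ∑ l, M4 Bbar i j k l * A k l) B =
      ∫ x : 𝕊², quadForm B x * (quadForm A x * binghamDensity Bbar x) ∂sphereMeasure := by
    rw [M4_contraction_eq_secondMoment, frob_secondMoment]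
    exact fun i j => Continuous.integrable_sphereMeasure (by fun_prop)
  have hsplit : ∫ x : 𝕊², (quadForm (B * Aᵀ) x - quadForm A x * quadForm B x) *
      binghamDensity Bbar x ∂sphereMeasure =
      (∫ x : 𝕊², quadForm (B * Aᵀ) x * binghamDensity Bbar x ∂sphereMeasure) -
        ∫ x : 𝕊², quadForm B x * (quadForm A x * binghamDensity Bbar x) ∂sphereMeasure := by
    rw [← integral_sub (Continuous.integrable_sphereMeasure (by fun_prop))
      (Continuous.integrable_sphereMeasure (by fun_prop))]
    exact integral_congr_ae (ae_of_all _ fun x => by ring)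
  rw [MQop, frob_sub_left, frob_add_left, frob_smul_left, hQ.eq_secondMoment_sub,
    Matrix.sub_mul, frob_sub_left, Matrix.smul_mul, Matrix.one_mul, frob_smul_left, hM2, hM4,
    hsplit]
  ring

theorem MQop_selfAdjoint_nonneg_general (Q Bbar : Matrix (Fin 3) (Fin 3) ℝ)
    (hmom : ∀ i j, (∫ m : Metric.sphere (0 : EuclideanSpace ℝ (Fin 3)) 1,
        ((m : EuclideanSpace ℝ (Fin 3)) i * (m : EuclideanSpace ℝ (Fin 3)) j -
          if i = j then (1 : ℝ) / 3 else 0) * binghamDensity Bbar m ∂sphereMeasure)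
        = Q i j) :
    ∀ A B : Matrix (Fin 3) (Fin 3) ℝ,
      frob (MQop Q Bbar A) B = frob (MQop Q Bbar B) A ∧
      0 ≤ frob (MQop Q Bbar A) A := by
  have hQ : IsBinghamQTensor Q Bbar := hmom
  intro A B
  constructor
  · rw [hQ.frob_MQop, hQ.frob_MQop, frob_comm A B]
    simp only [quadForm_mul_transpose_comm A B, mul_comm (quadForm B _)]
  · rw [hQ.frob_MQop]
    refine add_nonneg (mul_nonneg ?_ (frob_self_nonneg A)) (integral_nonneg fun x => ?_)
    · linarith [integral_binghamDensity_le_one Bbar]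
    · have hCS := sq_quadForm_le A x
      rw [norm_eq_of_mem_sphere x, one_pow, mul_one, sq] at hCS
      exact mul_nonneg (sub_nonneg.mpr hCS) (binghamDensity_nonneg Bbar x)

/-- For `Q ∈ Q_phy` with Bingham field `B_Q`, the operator `M_Q` is self-adjoint
for the Frobenius inner product and positive semidefinite. -/
theorem MQop_selfAdjoint_nonneg (Q Bbar : Matrix (Fin 3) (Fin 3) ℝ)
    (hB : Bbar.IsSymm) (hBtr : Bbar.trace = 0)
    (hQ : Q.IsHermitian) (hQtr : Q.trace = 0)
    (heig : ∀ i, hQ.eigenvalues i ∈ Set.Ioo (-(1 / 3) : ℝ) (2 / 3))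
    (hmom : ∀ i j, (∫ m : Metric.sphere (0 : EuclideanSpace ℝ (Fin 3)) 1,
        ((m : EuclideanSpace ℝ (Fin 3)) i * (m : EuclideanSpace ℝ (Fin 3)) j -
          if i = j then (1 : ℝ) / 3 else 0) * binghamDensity Bbar m ∂sphereMeasure)
        = Q i j) :
    ∀ A B : Matrix (Fin 3) (Fin 3) ℝ,
      frob (MQop Q Bbar A) B = frob (MQop Q Bbar B) A ∧
      0 ≤ frob (MQop Q Bbar A) A :=
  MQop_selfAdjoint_nonneg_general Q Bbar hmom
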